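/- arXiv:2111.04251 — 3 statements merged into one kernel-verified Lean document; each statement's English description precedes it below -/
import Mathlib

section
/- Let α be irrational with continued-fraction denominators (q_n)_{n≥0}, let 𝒜 > 0, and let (n_k)_{k≥0} be a strictly increasing sequence of indices with n₀ = 0 such that, writing Q_k = q_{n_k} and Q̄_k = q_{n_k + 1}, for each k ≥ 1 one has Q_k ≤ (Q̄_{k−1})^{𝒜⁴}, and for each k either Q̄_k ≥ Q_k^𝒜 or the pairs (Q̄_{k−1}, Q_k) and (Q_k, Q_{k+1}) are both CD(𝒜, 𝒜, 𝒜³) bridges. Then Q_k ≥ Q_{k−1}^𝒜 for every k ≥ 1. -/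
open Filter MeasureTheory Matrix
open scoped Real Topology ENNReal

noncomputable section

namespace Paper

/-- The circle `ℝ/ℤ`. -/
abbrev T1 := AddCircle (1 : ℝ)
/-- The projective line `ℝP¹`, identified with `ℝ/(1/2)ℤ`. -/
abbrev RP1 := AddCircle ((1 : ℝ) / 2)
abbrev M2R := Matrix (Fin 2) (Fin 2) ℝ
abbrev M2C := Matrix (Fin 2) (Fin 2) ℂ

instance : Fact ((0:ℝ) < 1) := ⟨one_pos⟩
instance : Fact ((0:ℝ) < 1 / 2) := ⟨by norm_num⟩

/-- canonical representative of a point of `𝕋` in `[0,1)` -/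
def rep1 (x : T1) : ℝ := (AddCircle.equivIco 1 0 x : ℝ)

/-- canonical representative of a point of `ℝP¹` in `[0,1/2)` -/
def repHalf (φ : RP1) : ℝ := (AddCircle.equivIco (1/2) 0 φ : ℝ)

/-- Euclidean operator norm of a real 2×2 matrix. -/
def opNorm (M : M2R) : ℝ :=
  ‖LinearMap.toContinuousLinearMap (Matrix.toEuclideanLin M)‖

/-- Euclidean operator norm of a complex 2×2 matrix. -/
def opNormC (M : M2C) : ℝ :=
  ‖LinearMap.toContinuousLinearMap (Matrix.toEuclideanLin M)‖

/-- unit vector of angle `2πt` -/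
def dirVec (t : ℝ) : EuclideanSpace ℝ (Fin 2) :=
  (WithLp.equiv 2 (Fin 2 → ℝ)).symm ![Real.cos (2*π*t), Real.sin (2*π*t)]

/-- the class in `ℝP¹ = ℝ/(1/2)ℤ` of the line spanned by a (nonzero) vector `v`:
the angle of `v` divided by `2π`, modulo `1/2`. -/
def lineClass (v : EuclideanSpace ℝ (Fin 2)) : RP1 :=
  ((Complex.arg (v 0 + v 1 * Complex.I) / (2*π) : ℝ) : RP1)

/-- the Möbius (projective) action of a matrix on `ℝP¹`. -/
def projAct (M : M2R) (φ : RP1) : RP1 :=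
  lineClass (Matrix.toEuclideanLin M (dirVec (repHalf φ)))

/-- projective skew product `(x,φ) ↦ (x+a, A(x)·φ)` for `A : 𝕋 → SL(2,ℝ)`. -/
def TprojT (a : T1) (A : T1 → M2R) : T1 × RP1 → T1 × RP1 :=
  fun p => (p.1 + a, projAct (A p.1) p.2)

/-- projective skew product for a map given as a `±`-periodic map on `ℝ`. -/
def TprojR (a : T1) (B : ℝ → M2R) : T1 × RP1 → T1 × RP1 :=
  fun p => (p.1 + a, projAct (B (rep1 p.1)) p.2)

/-- Möbius disjointness for a transformation of `𝕋 × ℝP¹`. -/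
def MobiusDisjoint (T : T1 × RP1 → T1 × RP1) : Prop :=
  ∀ f : T1 × RP1 → ℂ, Continuous f → ∀ p : T1 × RP1,
    Tendsto (fun N : ℕ => (N : ℂ)⁻¹ * ∑ n ∈ Finset.Icc 1 N,
      ((ArithmeticFunction.moebius n : ℤ) : ℂ) * f (T^[n] p)) atTop (𝓝 0)

/-- holomorphic on the horizontal strip of half-width `h`, entrywise -/
def HoloStrip (h : ℝ) (F : ℂ → M2C) : Prop :=
  ∀ i j, DifferentiableOn ℂ (fun z => F z i j) {z : ℂ | |z.im| < h}

/-- 1-periodic -/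
def Per1 (F : ℂ → M2C) : Prop := ∀ z, F (z + 1) = F z

/-- `sup`-bound on the strip, i.e. `‖F‖_h ≤ b`. -/
def StripBound (h : ℝ) (F : ℂ → M2C) (b : ℝ) : Prop :=
  ∀ z : ℂ, |z.im| < h → opNormC (F z) ≤ b

def ExtendsT (F : ℂ → M2C) (A : T1 → M2R) : Prop :=
  ∀ x : ℝ, F (x : ℂ) = (A (x : T1)).map Complex.ofReal

def ExtendsR (F : ℂ → M2C) (B : ℝ → M2R) : Prop :=
  ∀ x : ℝ, F (x : ℂ) = (B x).map Complex.ofReal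

/-- `A : 𝕋 → SL(2,ℝ)` is (real-)analytic: it extends to a bounded holomorphic
1-periodic map on some strip. -/
def TorusAnalytic (A : T1 → M2R) : Prop :=
  ∃ h : ℝ, 0 < h ∧ ∃ F : ℂ → M2C, HoloStrip h F ∧ Per1 F ∧
    (∃ b, StripBound h F b) ∧ ExtendsT F A

def RealAnalyticM (B : ℝ → M2R) : Prop :=
  ∀ (i j : Fin 2) (x : ℝ), AnalyticAt ℝ (fun t => B t i j) x

def PMPeriodic (B : ℝ → M2R) : Prop := ∀ x, B (x + 1) = B x ∨ B (x + 1) = - B x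

def Per1R (B : ℝ → M2R) : Prop := ∀ x, B (x + 1) = B x

def SL2V {X : Type*} (B : X → M2R) : Prop := ∀ x, (B x).det = 1

/-- `(α,A)` is (C^ω-)almost reducible. -/
def AlmostReducible (α : ℝ) (A : T1 → M2R) : Prop :=
  ∀ ε : ℝ, 0 < ε → ∃ (B : ℝ → M2R) (D : M2R), D.det = 1 ∧
    RealAnalyticM B ∧ SL2V B ∧ PMPeriodic B ∧
    ∀ x : ℝ, opNorm ((B (x + α))⁻¹ * A (x : T1) * B x - D) < ε

/-- `(α,A)` is reducible. -/
def Reducible (α : ℝ) (A : T1 → M2R) : Prop :=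
  ∃ (B : ℝ → M2R) (D : M2R), D.det = 1 ∧
    RealAnalyticM B ∧ SL2V B ∧ PMPeriodic B ∧
    ∀ x : ℝ, (B (x + α))⁻¹ * A (x : T1) * B x = D

/-- forward cocycle iterates `A_n(x) = A(x+(n-1)α)⋯A(x)`. -/
def fwdA (α : ℝ) (A : T1 → M2R) : ℕ → T1 → M2R
  | 0, _ => 1
  | n + 1, x => A (x + (((n : ℝ) * α : ℝ) : T1)) * fwdA α A n x

/-- backward cocycle iterates `A_{-n}(x) = A(x-nα)⁻¹⋯A(x-α)⁻¹`. -/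
def bwdA (α : ℝ) (A : T1 → M2R) : ℕ → T1 → M2R
  | 0, _ => 1
  | n + 1, x => (A (x - (((n + 1 : ℕ) * α : ℝ) : T1)))⁻¹ * bwdA α A n x

/-- uniform hyperbolicity of the cocycle `(α, A)`, phrased with continuous
stable/unstable line fields (a continuous invariant splitting of `ℝ²`). -/
def UniformlyHyperbolic (α : ℝ) (A : T1 → M2R) : Prop :=
  ∃ Es Eu : T1 → RP1, Continuous Es ∧ Continuous Eu ∧ (∀ x, Es x ≠ Eu x) ∧
    ∃ C : ℝ, 0 < C ∧ ∃ lam : ℝ, 0 < lam ∧ lam < 1 ∧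
      ∀ (x : T1) (n : ℕ), 1 ≤ n →
        (∀ t : ℝ, ‖Matrix.toEuclideanLin (fwdA α A n x) (t • dirVec (repHalf (Es x)))‖
            ≤ C * lam ^ n * ‖t • dirVec (repHalf (Es x))‖) ∧
        (∀ t : ℝ, ‖Matrix.toEuclideanLin (bwdA α A n x) (t • dirVec (repHalf (Eu x)))‖
            ≤ C * lam ^ n * ‖t • dirVec (repHalf (Eu x))‖)

/-- Gauss-map iterates: `α₀ = {α}`, `α_{n+1} = {α_n⁻¹}`. -/
def gaussIter (α : ℝ) : ℕ → ℝ
  | 0 => Int.fract α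
  | n + 1 => Int.fract (gaussIter α n)⁻¹

/-- continued fraction partial quotients `a_k` (for `k ≥ 1`). -/
def cfa (α : ℝ) (k : ℕ) : ℤ := ⌊(gaussIter α (k - 1))⁻¹⌋

/-- continued fraction denominators `q_k`. -/
def cfq (α : ℝ) : ℕ → ℤ
  | 0 => 1
  | 1 => cfa α 1
  | (k + 2) => cfa α (k + 2) * cfq α (k + 1) + cfq α k

/-- `β(α) = limsup (ln q_{k+1})/q_k`, valued in `[0,∞]`. -/
def betaAlpha (α : ℝ) : ℝ≥0∞ :=
  Filter.atTop.limsup fun k : ℕ => ENNReal.ofReal (Real.log (cfq α (k+1)) / (cfq α k))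

/-- `(q_l, q_n)` is a CD(𝒜,ℬ,𝒞) bridge. -/
def CDBridge (α : ℝ) (a b c : ℝ) (l n : ℕ) : Prop :=
  l ≤ n ∧ (∀ i : ℕ, l ≤ i → i < n → (cfq α (i+1) : ℝ) ≤ (cfq α i : ℝ) ^ a) ∧
    (cfq α l : ℝ) ^ b ≤ (cfq α n : ℝ) ∧ (cfq α n : ℝ) ≤ (cfq α l : ℝ) ^ c

/-- the conclusion of the CD-bridge selection lemma (Lemma 2.2 / AFK) for the
subsequence `Q_k = q_{nk k}`, `Q̄_k = q_{nk k + 1}`. -/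
def CDSelection (α : ℝ) (a : ℝ) (nk : ℕ → ℕ) : Prop :=
  StrictMono nk ∧ nk 0 = 0 ∧
  (∀ k : ℕ, 1 ≤ k → (cfq α (nk k) : ℝ) ≤ (cfq α (nk (k-1) + 1) : ℝ) ^ (a^4)) ∧
  (∀ k : ℕ, 1 ≤ k →
     ((cfq α (nk k) : ℝ) ^ a ≤ (cfq α (nk k + 1) : ℝ)) ∨
     (CDBridge α a a (a^3) (nk (k-1) + 1) (nk k) ∧ CDBridge α a a (a^3) (nk k) (nk (k+1))))

/-- entrywise derivative of a matrix-valued map on `ℝ`. -/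
def matDeriv (B : ℝ → M2R) (x : ℝ) : M2R :=
  Matrix.of fun i j => deriv (fun t => B t i j) x

/-- `‖G‖_{C⁰} ≤ b` (over `ℝ`). -/
def C0R (G : ℝ → M2R) (b : ℝ) : Prop := ∀ x, opNorm (G x) ≤ b

/-- `‖B‖_{C¹} ≤ b` (over `ℝ`). -/
def C1R (B : ℝ → M2R) (b : ℝ) : Prop :=
  ∀ x, opNorm (B x) ≤ b ∧ opNorm (matDeriv B x) ≤ b

def C0T (G : T1 → M2R) (b : ℝ) : Prop := ∀ x, opNorm (G x) ≤ b

/-- `‖G‖_{C⁰}` of a map on `𝕋`. -/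
def normC0T (G : T1 → M2R) : ℝ := ⨆ x : T1, opNorm (G x)

/-- `‖B‖_{C¹}` of a map on `ℝ`. -/
def normC1R (B : ℝ → M2R) : ℝ :=
  max (⨆ x : ℝ, opNorm (B x)) (⨆ x : ℝ, opNorm (matDeriv B x))

/-- the rotation `R_ϱ`. -/
def rotM (ϱ : ℝ) : M2R :=
  !![Real.cos (2*π*ϱ), -Real.sin (2*π*ϱ); Real.sin (2*π*ϱ), Real.cos (2*π*ϱ)]

def rotMC (ϱ : ℝ) : M2C := (rotM ϱ).map Complex.ofReal

/-- the parabolic matrix `[[1,c],[0,1]]`. -/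
def parabM (c : ℝ) : M2R := !![1, c; 0, 1]

/-- the Schrödinger cocycle matrix `S_{v,E}`. -/
def schrodM (v : T1 → ℝ) (E : ℝ) (x : T1) : M2R := !![E - v x, -1; 1, 0]



-- ====== measure complexity ======

/-- Bowen average metric `d̄_n`. -/
def bowen (T : T1 × RP1 → T1 × RP1) (n : ℕ) (x y : T1 × RP1) : ℝ :=
  (n : ℝ)⁻¹ * ∑ i ∈ Finset.range n, dist (T^[i] x) (T^[i] y)

/-- `S_n(d, ρ, ε)`, the measure complexity function. -/
def Scomplexity (T : T1 × RP1 → T1 × RP1) (ρ : Measure (T1 × RP1)) (n : ℕ) (ε : ℝ) : ℕ :=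
  sInf {m : ℕ | ∃ c : Fin m → T1 × RP1,
    ρ (⋃ i, {y | bowen T n (c i) y < ε}) > ENNReal.ofReal (1 - ε)}

-- ====== disk measure and random perturbation ======

/-- normalized Lebesgue measure on the closed unit disk of `ℂ`. -/
def diskMeasure : Measure ℂ :=
  (volume (Metric.closedBall (0:ℂ) 1))⁻¹ • volume.restrict (Metric.closedBall (0:ℂ) 1)

/-- the random perturbation `w_t(x) = Σ_{m≥1} ε(m)·2 Re(t_m e^{2πimx})`. -/
def wPert (ε : ℕ → ℝ) (t : ℕ → ℂ) (x : T1) : ℝ :=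
  ∑' m : ℕ, if m = 0 then 0 else
    ε m * (2 * (t m * Complex.exp (2*π*(m:ℝ)*Complex.I*(rep1 x))).re)

-- ====== Fourier coefficients / dual operator / resonances ======

/-- Fourier coefficients `v̂(l)` of a function on `𝕋`. -/
def vhat (v : T1 → ℝ) (l : ℤ) : ℂ :=
  ∫ x in (0:ℝ)..1, (v (x : T1) : ℂ) * Complex.exp (-2*π*Complex.I*l*x)

/-- the eigenvalue equation `Ĥ_{v,α,θ} u = E u` for the dual operator. -/
def DualEigen (α : ℝ) (v : T1 → ℝ) (θ E : ℝ) (u : ℤ → ℂ) : Prop :=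
  ∀ k : ℤ, (∑' l : ℤ, vhat v l * u (k - l))
      + ((2 * Real.cos (2*π*(θ + (k:ℝ)*α)) : ℝ) : ℂ) * u k = (E : ℂ) * u k

/-- `‖x‖_𝕋 = dist(x, ℤ)`. -/
def distZ (x : ℝ) : ℝ := |x - round x|

/-- `k` is an `ε₀`-resonance of `θ`. -/
def IsResonance (α θ ε₀ : ℝ) (k : ℤ) : Prop :=
  distZ (2*θ - (k:ℝ)*α) ≤ Real.exp (-ε₀ * |(k:ℝ)|) ∧
  ∀ j : ℤ, |j| ≤ |k| → distZ (2*θ - (k:ℝ)*α) ≤ distZ (2*θ - (j:ℝ)*α)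

/-- `k, k'` are consecutive `ε₀`-resonances of `θ` (in the ordering by absolute value). -/
def AdjacentResonances (α θ ε₀ : ℝ) (k k' : ℤ) : Prop :=
  IsResonance α θ ε₀ k ∧ IsResonance α θ ε₀ k' ∧ k ≠ k' ∧ |k| ≤ |k'| ∧
  ∀ k'' : ℤ, IsResonance α θ ε₀ k'' → |k''| ≤ |k| ∨ |k'| ≤ |k''|

/-- the family `{Ĥ_{v,α,θ}}_θ` is almost localized with parameters `C₀, C₁, ε₀, ε₁`. -/
def AlmostLocalized (α : ℝ) (v : T1 → ℝ) (C₀ C₁ ε₀ ε₁ : ℝ) : Prop :=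
  ∀ (θ E : ℝ) (u : ℤ → ℂ), DualEigen α v θ E u → u 0 = 1 →
    (∀ k : ℤ, ‖u k‖ ≤ 1 + |(k:ℝ)|) →
    (∀ nj nj1 : ℤ, AdjacentResonances α θ ε₀ nj nj1 →
      ∀ k : ℤ, C₀ * (1 + |(nj:ℝ)|) ≤ |(k:ℝ)| → |(k:ℝ)| ≤ |(nj1:ℝ)| / C₀ →
        ‖u k‖ ≤ C₁ * Real.exp (-ε₁ * |(k:ℝ)|)) ∧
    (∀ nj : ℤ, IsResonance α θ ε₀ nj →
      (∀ k'' : ℤ, IsResonance α θ ε₀ k'' → |k''| ≤ |nj|) →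
      ∀ k : ℤ, C₀ * (1 + |(nj:ℝ)|) ≤ |(k:ℝ)| →
        ‖u k‖ ≤ C₁ * Real.exp (-ε₁ * |(k:ℝ)|))

/-- the truncation `u^I(x) = Σ_{k ∈ I} û_k e^{2πikx}` with
`I = [-⌊m/2⌋, m - ⌊m/2⌋]`. -/
def uI (u : ℤ → ℂ) (m : ℕ) (z : ℂ) : ℂ :=
  ∑ k ∈ Finset.Icc (-((m:ℤ)/2)) ((m:ℤ) - (m:ℤ)/2),
    u k * Complex.exp (2*π*Complex.I*k*z)

/-- `U^I(x) = (e^{2πiθ} u^I(x), u^I(x-α))ᵀ`. -/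
def UIvec (u : ℤ → ℂ) (θ α : ℝ) (m : ℕ) (z : ℂ) : Fin 2 → ℂ :=
  ![Complex.exp (2*π*Complex.I*θ) * uI u m z, uI u m (z - α)]

/-- the complexified Schrödinger matrix `S_{v,E}` on the strip. -/
def SvECmat (E : ℝ) (vc : ℂ → ℂ) (z : ℂ) : M2C := !![(E:ℂ) - vc z, -1; 1, 0]

/-- `vc` is a holomorphic 1-periodic extension of `v` to the strip of width `h`. -/
def ScalarExt (h : ℝ) (v : T1 → ℝ) (vc : ℂ → ℂ) : Prop :=
  DifferentiableOn ℂ vc {z : ℂ | |z.im| < h} ∧ (∀ z, vc (z+1) = vc z) ∧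
    ∀ x : ℝ, vc (x : ℂ) = ((v (x : T1) : ℝ) : ℂ)

/-- `v : 𝕋 → ℝ` is real-analytic. -/
def ScalarTorusAnalytic (v : T1 → ℝ) : Prop :=
  ∃ h : ℝ, 0 < h ∧ ∃ vc : ℂ → ℂ, ScalarExt h v vc ∧
    ∃ b, ∀ z : ℂ, |z.im| < h → ‖vc z‖ ≤ b

-- ====== two-frequency (continuous time) objects ======

/-- `⟨k, ω⟩ = k₁ + k₂ α` for `ω = (1, α)`. -/
def kip (k : ℤ × ℤ) (α : ℝ) : ℝ := (k.1 : ℝ) + (k.2 : ℝ) * α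

/-- `|k| = |k₁| + |k₂|`. -/
def knorm (k : ℤ × ℤ) : ℝ := ((|k.1| + |k.2| : ℤ) : ℝ)

/-- directional derivative `∂_ω B(θ) = d/dt B(θ + tω)|₀`. -/
def dOm (ω : ℝ × ℝ) (B : ℝ × ℝ → M2R) (θ : ℝ × ℝ) : M2R :=
  Matrix.of fun i j => deriv (fun t : ℝ => B (θ.1 + t * ω.1, θ.2 + t * ω.2) i j) 0

/-- Fourier coefficient `F̂(k)` of a function on `𝕋²`. -/
def fhat2 (F : ℝ × ℝ → M2R) (k : ℤ × ℤ) : M2C :=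
  Matrix.of fun i j => ∫ θ in Set.Icc (0:ℝ) 1 ×ˢ Set.Icc (0:ℝ) 1,
    ((F θ i j : ℝ) : ℂ) * Complex.exp (-2*π*Complex.I*((k.1:ℝ)*θ.1 + (k.2:ℝ)*θ.2))

/-- weighted Fourier norm `|F|_h = Σ_k ‖F̂(k)‖ e^{2π|k|h}`, valued in `[0,∞]`. -/
def wnorm2 (h : ℝ) (F : ℝ × ℝ → M2R) : ℝ≥0∞ :=
  ∑' k : ℤ × ℤ, ENNReal.ofReal (opNormC (fhat2 F k) * Real.exp (2*π*(knorm k)*h))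

def Per2 (F : ℝ × ℝ → M2R) : Prop :=
  ∀ θ : ℝ × ℝ, F (θ.1 + 1, θ.2) = F θ ∧ F (θ.1, θ.2 + 1) = F θ

def PMPer2 (B : ℝ × ℝ → M2R) : Prop :=
  ∀ θ : ℝ × ℝ, (B (θ.1 + 1, θ.2) = B θ ∨ B (θ.1 + 1, θ.2) = -B θ) ∧
    (B (θ.1, θ.2 + 1) = B θ ∨ B (θ.1, θ.2 + 1) = -B θ)

def RealAnalytic2 (B : ℝ × ℝ → M2R) : Prop :=
  ∀ (i j : Fin 2) (θ : ℝ × ℝ), AnalyticAt ℝ (fun t => B t i j) θ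

def Cont2 (F : ℝ × ℝ → M2R) : Prop := ∀ i j, Continuous fun θ => F θ i j

def Strip2 (h : ℝ) : Set (ℂ × ℂ) := {z | |z.1.im| < h ∧ |z.2.im| < h}

def HoloStrip2 (h : ℝ) (F : ℂ × ℂ → M2C) : Prop :=
  ∀ i j, DifferentiableOn ℂ (fun z => F z i j) (Strip2 h)

def Per2C (F : ℂ × ℂ → M2C) : Prop :=
  ∀ z : ℂ × ℂ, F (z.1 + 1, z.2) = F z ∧ F (z.1, z.2 + 1) = F z

def StripBound2 (h : ℝ) (F : ℂ × ℂ → M2C) (b : ℝ) : Prop :=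
  ∀ z ∈ Strip2 h, opNormC (F z) ≤ b

def Extends2 (F : ℂ × ℂ → M2C) (G : ℝ × ℝ → M2R) : Prop :=
  ∀ θ : ℝ × ℝ, F ((θ.1 : ℂ), (θ.2 : ℂ)) = (G θ).map Complex.ofReal

/-- `‖B‖_{C¹} ≤ b` for a map on `ℝ²` (sup of `B` and its partial derivatives). -/
def C1R2 (B : ℝ × ℝ → M2R) (b : ℝ) : Prop :=
  ∀ θ : ℝ × ℝ, opNorm (B θ) ≤ b ∧
    opNorm (Matrix.of fun i j => deriv (fun t => B (θ.1 + t, θ.2) i j) 0) ≤ b ∧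
    opNorm (Matrix.of fun i j => deriv (fun t => B (θ.1, θ.2 + t) i j) 0) ≤ b

/-- `A = 2πϱJ` with `J = [[0,1],[-1,0]]`. -/
def rotGen (ϱ : ℝ) : M2R := !![0, 2*π*ϱ; -(2*π*ϱ), 0]

/-- `[[0,c],[0,0]]`. -/
def parabGen (c : ℝ) : M2R := !![0, c; 0, 0]

def parabGenC (c : ℝ) : M2C := (parabGen c).map Complex.ofReal

/-!
For `k = 1` the claim is `q₀ ^ 𝒜 = 1 ≤ Q₁`. For `k ≥ 2`, either `Q̄_{k-1} ≥ Q_{k-1}^𝒜` and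
`Q_k ≥ Q̄_{k-1}` because `q` is monotone (for irrational `α` every partial quotient is `≥ 1`),
or `(Q_{k-1}, Q_k)` is a CD bridge, whose lower bound is the claim.
-/

theorem _root_.Irrational.fract {x : ℝ} (hx : Irrational x) : Irrational (Int.fract x) :=
  hx.sub_intCast _

theorem irrational_gaussIter {α : ℝ} (hα : Irrational α) : ∀ n, Irrational (gaussIter α n)
  | 0 => hα.fract
  | n + 1 => (irrational_gaussIter hα n).inv.fract

theorem gaussIter_mem_Ioo {α : ℝ} (hα : Irrational α) (n : ℕ) :
    gaussIter α n ∈ Set.Ioo 0 1 := by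
  have hfract : ∃ x, gaussIter α n = Int.fract x := by
    cases n <;> exact ⟨_, rfl⟩
  obtain ⟨x, hx⟩ := hfract
  refine ⟨?_, hx ▸ Int.fract_lt_one x⟩
  exact (hx ▸ Int.fract_nonneg x).lt_of_ne' (irrational_gaussIter hα n).ne_zero

theorem one_le_cfa {α : ℝ} (hα : Irrational α) (k : ℕ) : 1 ≤ cfa α k := by
  obtain ⟨hpos, hlt⟩ := gaussIter_mem_Ioo hα (k - 1)
  exact Int.le_floor.2 (by exact_mod_cast one_le_inv₀ hpos |>.2 hlt.le)

theorem one_le_cfq {α : ℝ} (hα : Irrational α) : ∀ n, 1 ≤ cfq α n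
  | 0 => le_rfl
  | 1 => one_le_cfa hα 1
  | n + 2 => by
    have := one_le_cfq hα (n + 1)
    have := one_le_cfq hα n
    have := one_le_cfa hα (n + 2)
    rw [cfq]
    nlinarith

theorem cfq_monotone {α : ℝ} (hα : Irrational α) : Monotone (cfq α) := by
  refine monotone_nat_of_le_succ fun n => ?_
  cases n with
  | zero => exact one_le_cfa hα 1
  | succ n =>
    have := one_le_cfq hα (n + 1)
    have := one_le_cfq hα n
    have := one_le_cfa hα (n + 2)
    show cfq α (n + 1) ≤ cfa α (n + 2) * cfq α (n + 1) + cfq α n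
    nlinarith

theorem cd_bridge_selection_growth_general (α : ℝ) (hα : Irrational α) (a : ℝ)
    (nk : ℕ → ℕ) (hsel : CDSelection α a nk) :
    ∀ k : ℕ, 1 ≤ k → (cfq α (nk (k-1)) : ℝ) ^ a ≤ (cfq α (nk k) : ℝ) := by
  obtain ⟨hmono, hzero, -, hgrowth⟩ := hsel
  rintro (_ | _ | k) hk
  · omega
  · have hQ₁ : (1 : ℝ) ≤ cfq α (nk 1) := by exact_mod_cast one_le_cfq hα _
    simpa [hzero, cfq] using hQ₁
  · rcases hgrowth (k + 1) k.succ_pos with hbar | ⟨-, hbridge⟩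
    · have hQbar_le : (cfq α (nk (k + 1) + 1) : ℝ) ≤ cfq α (nk (k + 2)) := by
        exact_mod_cast cfq_monotone hα (hmono (k + 1).lt_succ_self)
      exact hbar.trans hQbar_le
    · exact hbridge.2.2.1

/-- For a subsequence as produced by the CD-bridge selection
lemma, `Q_k ≥ Q_{k-1}^𝒜` for every `k ≥ 1`. -/
theorem cd_bridge_selection_growth (α : ℝ) (hα : Irrational α) (a : ℝ) (ha : 0 < a)
    (nk : ℕ → ℕ) (hsel : CDSelection α a nk) :
    ∀ k : ℕ, 1 ≤ k → (cfq α (nk (k-1)) : ℝ) ^ a ≤ (cfq α (nk k) : ℝ) :=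
  cd_bridge_selection_growth_general α hα a nk hsel

end Paper

end
end

section
/- Let α ∈ ℝ be irrational, ω = (1, α) ∈ ℝ², h' > 0, and 0 < η ≤ 10⁻². Let A = [[0, c*], [0, 0]] with |c*| ≤ 1 (c* ∈ ℝ). Let Y : 𝕋² → sl(2,ℝ) be a map with absolutely convergent weighted Fourier series |Y|_{h'} = Σ_{k∈ℤ²} ‖Ŷ(k)‖ e^{2π|k|h'} < ∞, whose Fourier support is contained in {k ∈ ℤ² : |⟨k, ω⟩| ≥ η^{1/3}} (i.e., Ŷ(k) = 0 whenever |⟨k, ω⟩| < η^{1/3}). Then the map Z := ∂_ω Y − [A, Y] (where (∂_ω Y)(θ) = Σ_k 2πi⟨k, ω⟩ Ŷ(k) e^{2πi⟨k,θ⟩} and [A, Y] = AY − YA) has Fourier support in the same set and satisfies |∂_ω Y − [A, Y]|_{h'} ≥ η |Y|_{h'}. -/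
open Filter MeasureTheory Matrix
open scoped Real Topology ENNReal

noncomputable section

namespace Paper

/-!
On each Fourier mode, `Ẑ(k) = μ Ŷ(k) - ad_A Ŷ(k)` with `μ = 2πi⟨k,ω⟩`. Since `A² = 0`, `ad_A³ = 0`,
so `μ - ad_A` is inverted by the truncated Neumann series `μ⁻¹ + μ⁻² ad_A + μ⁻³ ad_A²`. With
`‖ad_A‖ ≤ 2` and `|μ| ≥ 2π η^{1/3}` on the support of `Ŷ`, this gives `η ‖Ŷ(k)‖ ≤ ‖Ẑ(k)‖`, and
the weighted norms compare term by term.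
-/

open scoped Matrix.Norms.L2Operator

lemma opNormC_eq_norm (M : M2C) : opNormC M = ‖M‖ := rfl

lemma parabGenC_mul_self (c : ℝ) : parabGenC c * parabGenC c = 0 := by
  ext i j
  fin_cases i <;> fin_cases j <;> simp [parabGenC, parabGen, Matrix.mul_apply]

lemma norm_parabGenC (c : ℝ) : ‖parabGenC c‖ = |c| := by
  have hdiag : (parabGenC c)ᴴ * parabGenC c = Matrix.diagonal ![0, ((c ^ 2 : ℝ) : ℂ)] := by
    ext i j
    fin_cases i <;> fin_cases j <;> simp [parabGenC, parabGen, Matrix.mul_apply, sq]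
  have hvec : ‖(![0, ((c ^ 2 : ℝ) : ℂ)] : Fin 2 → ℂ)‖ = c ^ 2 := by
    refine le_antisymm ((pi_norm_le_iff_of_nonneg (sq_nonneg c)).2 fun i => ?_) ?_
    · fin_cases i <;> simp [sq_nonneg]
    · refine le_trans (le_of_eq ?_) (norm_le_pi_norm _ 1)
      simp
  have hsq : ‖parabGenC c‖ * ‖parabGenC c‖ = |c| * |c| := by
    rw [← Matrix.l2_opNorm_conjTranspose_mul_self, hdiag, Matrix.l2_opNorm_diagonal, hvec,
      abs_mul_abs_self, sq]
  nlinarith [norm_nonneg (parabGenC c), abs_nonneg c]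

section SquareZero

variable {𝕜 R : Type*}

lemma lie_smul_sub [CommRing 𝕜] [Ring R] [Algebra 𝕜 R] (A Y W : R) (μ : 𝕜) :
    ⁅A, μ • Y - W⁆ = μ • ⁅A, Y⁆ - ⁅A, W⁆ := by
  simp only [Ring.lie_def, mul_sub, sub_mul, mul_smul_comm, smul_mul_assoc, smul_sub]
  abel

lemma lie_lie_lie_eq_zero_of_mul_self_eq_zero [Ring R] {A : R} (hA : A * A = 0) (M : R) :
    ⁅A, ⁅A, ⁅A, M⁆⁆⁆ = 0 := by
  have hA' : ∀ X : R, A * (A * X) = 0 := fun X => by rw [← mul_assoc, hA, zero_mul]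
  simp only [Ring.lie_def, mul_sub, sub_mul, mul_assoc, hA', hA, mul_zero, zero_mul]
  abel

lemma pow_three_smul_eq_of_mul_self_eq_zero [CommRing 𝕜] [Ring R] [Algebra 𝕜 R] {A : R}
    (hA : A * A = 0) (μ : 𝕜) (Y : R) :
    μ ^ 3 • Y = μ ^ 2 • (μ • Y - ⁅A, Y⁆) + μ • ⁅A, μ • Y - ⁅A, Y⁆⁆
      + ⁅A, ⁅A, μ • Y - ⁅A, Y⁆⁆⁆ := by
  rw [lie_smul_sub, lie_smul_sub, lie_lie_lie_eq_zero_of_mul_self_eq_zero hA]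
  module

lemma norm_lie_le [NonUnitalSeminormedRing R] (A M : R) : ‖⁅A, M⁆‖ ≤ 2 * ‖A‖ * ‖M‖ := by
  rw [Ring.lie_def]
  calc ‖A * M - M * A‖ ≤ ‖A‖ * ‖M‖ + ‖M‖ * ‖A‖ :=
        (norm_sub_le _ _).trans (add_le_add (norm_mul_le _ _) (norm_mul_le _ _))
    _ = 2 * ‖A‖ * ‖M‖ := by ring

lemma norm_pow_three_mul_norm_le_of_mul_self_eq_zero [NormedField 𝕜] [SeminormedRing R]
    [NormedAlgebra 𝕜 R] {A : R} (hA : A * A = 0) (μ : 𝕜) (Y : R) :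
    ‖μ‖ ^ 3 * ‖Y‖ ≤ (‖μ‖ ^ 2 + 2 * ‖A‖ * ‖μ‖ + 4 * ‖A‖ ^ 2) * ‖μ • Y - ⁅A, Y⁆‖ := by
  set Z := μ • Y - ⁅A, Y⁆
  have hZ := norm_lie_le A Z
  have hZZ := norm_lie_le A ⁅A, Z⁆
  have hA0 := norm_nonneg A
  calc ‖μ‖ ^ 3 * ‖Y‖ = ‖μ ^ 2 • Z + μ • ⁅A, Z⁆ + ⁅A, ⁅A, Z⁆⁆‖ := by
        rw [← pow_three_smul_eq_of_mul_self_eq_zero hA, norm_smul, norm_pow]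
    _ ≤ ‖μ‖ ^ 2 * ‖Z‖ + ‖μ‖ * ‖⁅A, Z⁆‖ + ‖⁅A, ⁅A, Z⁆⁆‖ := by
        grw [norm_add₃_le, norm_smul, norm_smul, norm_pow]
    _ ≤ _ := by nlinarith [norm_nonneg μ, norm_nonneg Z]

lemma cube_mul_sq_add_le {s t : ℝ} (hs0 : 0 < s) (hs1 : s ≤ 1) (hst : 2 * π * s ≤ t) :
    s ^ 3 * (t ^ 2 + 2 * t + 4) ≤ t ^ 3 := by
  have h6 : 6 * s ≤ t := by nlinarith [Real.pi_gt_three]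
  have hs2 : s ^ 2 ≤ s := by nlinarith
  have hs3 : s ^ 3 ≤ s ^ 2 := by nlinarith
  have h1 : s * t ^ 2 ≤ t ^ 3 / 6 := by nlinarith [sq_nonneg t]
  have h2 : s ^ 2 * t ≤ t ^ 3 / 36 := by nlinarith [pow_le_pow_left₀ (by positivity) h6 2]
  have h3 : s ^ 3 ≤ t ^ 3 / 216 := by nlinarith [pow_le_pow_left₀ (by positivity) h6 3]
  nlinarith

lemma mul_norm_le_norm_smul_sub_lie_of_mul_self_eq_zero [NormedField 𝕜] [SeminormedRing R]
    [NormedAlgebra 𝕜 R] {A : R} (hA : A * A = 0) (hA1 : ‖A‖ ≤ 1) {η : ℝ} (hη0 : 0 < η)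
    (hη1 : η ≤ 1) {μ : 𝕜} (hμ : 2 * π * η ^ (1 / 3 : ℝ) ≤ ‖μ‖) (Y : R) :
    η * ‖Y‖ ≤ ‖μ • Y - ⁅A, Y⁆‖ := by
  set s := η ^ (1 / 3 : ℝ)
  have hs0 : 0 < s := Real.rpow_pos_of_pos hη0 _
  have hs3 : s ^ 3 = η := by
    rw [← Real.rpow_natCast, ← Real.rpow_mul hη0.le]
    norm_num
  have ht : 0 < ‖μ‖ := lt_of_lt_of_le (by positivity) hμ
  have hpoly : η * (‖μ‖ ^ 2 + 2 * ‖A‖ * ‖μ‖ + 4 * ‖A‖ ^ 2) ≤ ‖μ‖ ^ 3 := by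
    have hA0 := norm_nonneg A
    rw [← hs3]
    refine le_trans ?_ (cube_mul_sq_add_le hs0 (Real.rpow_le_one hη0.le hη1 (by norm_num)) hμ)
    gcongr
    · nlinarith
    · nlinarith
  have key := norm_pow_three_mul_norm_le_of_mul_self_eq_zero hA μ Y
  refine le_of_mul_le_mul_left ?_ (pow_pos ht 3)
  calc ‖μ‖ ^ 3 * (η * ‖Y‖) = η * (‖μ‖ ^ 3 * ‖Y‖) := by ring
    _ ≤ η * ((‖μ‖ ^ 2 + 2 * ‖A‖ * ‖μ‖ + 4 * ‖A‖ ^ 2) * ‖μ • Y - ⁅A, Y⁆‖) := by gcongr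
    _ ≤ ‖μ‖ ^ 3 * ‖μ • Y - ⁅A, Y⁆‖ := by
        rw [← mul_assoc]
        gcongr

end SquareZero

lemma ENNReal.ofReal_mul_tsum_le_tsum {ι : Type*} {c : ℝ} (hc : 0 ≤ c) {a b w : ι → ℝ}
    (hw : ∀ i, 0 ≤ w i) (hab : ∀ i, c * a i ≤ b i) :
    ENNReal.ofReal c * ∑' i, ENNReal.ofReal (a i * w i) ≤ ∑' i, ENNReal.ofReal (b i * w i) := by
  rw [← ENNReal.tsum_mul_left]
  refine ENNReal.tsum_le_tsum fun i => ?_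
  rw [← ENNReal.ofReal_mul hc, ← mul_assoc]
  exact ENNReal.ofReal_le_ofReal (mul_le_mul_of_nonneg_right (hab i) (hw i))

theorem parabolic_nonresonant_lower_bound_general
    (α : ℝ) (h' η cst : ℝ)
    (hη0 : 0 < η) (hη : η ≤ 1/100) (hc : |cst| ≤ 1)
    (Yh : ℤ × ℤ → M2C)
    (hsupp : ∀ k : ℤ × ℤ, |kip k α| < η ^ ((1:ℝ)/3) → Yh k = 0) :
    (∀ k : ℤ × ℤ, |kip k α| < η ^ ((1:ℝ)/3) →
      (((2*π*(kip k α) : ℝ) : ℂ) * Complex.I) • Yh k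
        - (parabGenC cst * Yh k - Yh k * parabGenC cst) = 0) ∧
    ENNReal.ofReal η *
        (∑' k : ℤ × ℤ, ENNReal.ofReal (opNormC (Yh k) * Real.exp (2*π*(knorm k)*h')))
      ≤ ∑' k : ℤ × ℤ, ENNReal.ofReal (opNormC
          ((((2*π*(kip k α) : ℝ) : ℂ) * Complex.I) • Yh k
            - (parabGenC cst * Yh k - Yh k * parabGenC cst))
          * Real.exp (2*π*(knorm k)*h')) := by
  refine ⟨fun k hk => by simp [hsupp k hk], ?_⟩
  refine ENNReal.ofReal_mul_tsum_le_tsum hη0.le (fun k => (Real.exp_pos _).le) fun k => ?_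
  by_cases hk : |kip k α| < η ^ ((1:ℝ)/3)
  · simp [hsupp k hk, opNormC_eq_norm]
  have hμ : ‖(((2*π*(kip k α) : ℝ) : ℂ) * Complex.I)‖ = 2 * π * |kip k α| := by
    rw [norm_mul, Complex.norm_I, mul_one, Complex.norm_real, Real.norm_eq_abs, abs_mul,
      abs_of_pos Real.two_pi_pos]
  exact mul_norm_le_norm_smul_sub_lie_of_mul_self_eq_zero (parabGenC_mul_self cst)
    ((norm_parabGenC cst).trans_le hc) hη0 (by linarith) (by rw [hμ]; gcongr; linarith) (Yh k)

/-- Non-resonant lower bound in the parabolic case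
(Corollary 5.10): if the (matrix-valued) Fourier coefficients `Ŷ(k)` of an
`sl(2,ℝ)`-valued map `Y` on `𝕋²` are supported on `{|⟨k,ω⟩| ≥ η^{1/3}}`, then
the coefficients of `Z = ∂_ω Y − [A,Y]` (namely `2πi⟨k,ω⟩Ŷ(k) − [A,Ŷ(k)]`)
have the same support and `|Z|_{h'} ≥ η |Y|_{h'}` (weighted `ℓ¹` norms taken
in `[0,∞]`). -/
theorem parabolic_nonresonant_lower_bound
    (α : ℝ) (hα : Irrational α) (h' η cst : ℝ)
    (hh' : 0 < h') (hη0 : 0 < η) (hη : η ≤ 1/100) (hc : |cst| ≤ 1)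
    (Yh : ℤ × ℤ → M2C)
    (hreal : ∀ k : ℤ × ℤ, Yh (-k.1, -k.2) = (Yh k).map (starRingEnd ℂ))
    (htr : ∀ k, (Yh k).trace = 0)
    (hsupp : ∀ k : ℤ × ℤ, |kip k α| < η ^ ((1:ℝ)/3) → Yh k = 0)
    (hfin : (∑' k : ℤ × ℤ,
      ENNReal.ofReal (opNormC (Yh k) * Real.exp (2*π*(knorm k)*h'))) ≠ ⊤) :
    (∀ k : ℤ × ℤ, |kip k α| < η ^ ((1:ℝ)/3) →
      (((2*π*(kip k α) : ℝ) : ℂ) * Complex.I) • Yh k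
        - (parabGenC cst * Yh k - Yh k * parabGenC cst) = 0) ∧
    ENNReal.ofReal η *
        (∑' k : ℤ × ℤ, ENNReal.ofReal (opNormC (Yh k) * Real.exp (2*π*(knorm k)*h')))
      ≤ ∑' k : ℤ × ℤ, ENNReal.ofReal (opNormC
          ((((2*π*(kip k α) : ℝ) : ℂ) * Complex.I) • Yh k
            - (parabGenC cst * Yh k - Yh k * parabGenC cst))
          * Real.exp (2*π*(knorm k)*h')) :=
  parabolic_nonresonant_lower_bound_general α h' η cst hη0 hη hc Yh hsupp

end Paper

end
end

section
/- There is an absolute constant C* ≥ 1 such that for every a ∈ 𝕋, every C¹ map A : ℝ → SL(2,ℝ) with A(x+1) = ±A(x), and every continuous F : 𝕋 → SL(2,ℝ) with ‖F − I‖_{C⁰} ≤ 1/6, one has for all (θ, φ) ∈ 𝕋 × ℝP¹: d(T_{(a, A·F)}(θ, φ), T_{(a, A)}(θ, φ)) ≤ 2C* ‖A‖_{C¹}⁴ ‖F − I‖_{C⁰}, where (A·F)(θ) = A(θ)F(θ). -/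
open Filter MeasureTheory Matrix
open scoped Real Topology ENNReal

noncomputable section

namespace Paper

/-!
Let `v` be the unit vector of the direction `φ`. The two image lines are spanned by
`u = A F v` and `w = A v`, with `‖u - w‖ ≤ ‖A‖ ‖F - I‖`, and `det A = 1` forces
`‖w‖ ≥ 1 / ‖A‖` (the parallelogram spanned by `A v` and `A (Jv)` has area `1`).
The sine of the angle between `u` and `w` is at most `‖u - w‖ / ‖w‖`, and Jordan's inequality
`|sin x| ≥ 2|x|/π` on `|x| ≤ π/2` turns this into a bound on the distance in `ℝ/(1/2)ℤ`.
Altogether the distance is at most `‖A‖² ‖F - I‖ / 4 ≤ 2 ‖A‖⁴ ‖F - I‖`, so `C* = 1` works.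
-/

section

open Complex

theorem four_mul_norm_coe_div_two_pi_le_abs_sin (x : ℝ) :
    4 * ‖((x / (2 * π) : ℝ) : RP1)‖ ≤ |Real.sin x| := by
  have hπ := Real.pi_pos
  set k := round (x / π)
  have hnorm : ‖((x / (2 * π) : ℝ) : RP1)‖ = |x - k * π| / (2 * π) := by
    have h₁ : ((1 : ℝ) / 2)⁻¹ * (x / (2 * π)) = x / π := by field_simp
    have h₂ : x / (2 * π) - k * (1 / 2) = (x - k * π) / (2 * π) := by field_simp
    rw [AddCircle.norm_eq, h₁, h₂, abs_div, abs_of_pos Real.two_pi_pos]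
  have hsmall : |x - k * π| ≤ π / 2 := by
    have hround := abs_sub_round (x / π)
    calc |x - k * π| = π * |x / π - k| := by
          rw [← abs_of_pos hπ, ← abs_mul, abs_of_pos hπ]
          congr 1
          field_simp
      _ ≤ π / 2 := by nlinarith
  calc 4 * ‖((x / (2 * π) : ℝ) : RP1)‖ = 2 / π * |x - k * π| := by
        rw [hnorm]
        field_simp
        ring
    _ ≤ |Real.sin (x - k * π)| := Real.mul_abs_le_abs_sin hsmall
    _ = |Real.sin x| := by simp [Real.sin_sub_int_mul_pi, abs_mul]

theorem dist_coe_arg_div_two_pi_le (z : ℂ) {w : ℂ} (hw : w ≠ 0) :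
    dist ((arg z / (2 * π) : ℝ) : RP1) ((arg w / (2 * π) : ℝ) : RP1)
      ≤ ‖z - w‖ / (4 * ‖w‖) := by
  have hw' : 0 < ‖w‖ := norm_pos_iff.2 hw
  rcases eq_or_ne z 0 with rfl | hz
  · -- no distance in `ℝ/(1/2)ℤ` exceeds `1/4`, the right-hand side here
    have hquarter := AddCircle.norm_le_half_period ((1 : ℝ) / 2)
      (x := ((arg 0 / (2 * π) : ℝ) : RP1) - ((arg w / (2 * π) : ℝ) : RP1)) (by norm_num)
    rw [dist_eq_norm, zero_sub, norm_neg, div_mul_cancel_right₀ hw'.ne']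
    norm_num at hquarter ⊢
    linarith
  have hz' : 0 < ‖z‖ := norm_pos_iff.2 hz
  have hsin : Real.sin (arg z - arg w) = (z.im * w.re - z.re * w.im) / (‖z‖ * ‖w‖) := by
    rw [Real.sin_sub, sin_arg, sin_arg, cos_arg hz, cos_arg hw]
    field_simp
  have hcross : |z.im * w.re - z.re * w.im| ≤ ‖z‖ * ‖z - w‖ := by
    have h : z.im * w.re - z.re * w.im = (starRingEnd ℂ z * (z - w)).im := by
      simp only [mul_im, conj_re, conj_im, sub_re, sub_im]
      ring
    rw [h]
    exact (abs_im_le_norm _).trans (by simp)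
  calc dist ((arg z / (2 * π) : ℝ) : RP1) ((arg w / (2 * π) : ℝ) : RP1)
      = ‖(((arg z - arg w) / (2 * π) : ℝ) : RP1)‖ := by
        rw [dist_eq_norm, ← AddCircle.coe_sub, sub_div]
    _ ≤ |Real.sin (arg z - arg w)| / 4 := by
        linarith [four_mul_norm_coe_div_two_pi_le_abs_sin (arg z - arg w)]
    _ ≤ ‖z - w‖ / (4 * ‖w‖) := by
        rw [hsin, abs_div, abs_of_pos (mul_pos hz' hw')]
        calc _ ≤ ‖z‖ * ‖z - w‖ / (‖z‖ * ‖w‖) / 4 := by gcongr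
          _ = ‖z - w‖ / (4 * ‖w‖) := by field_simp

theorem dist_lineClass_le (v : EuclideanSpace ℝ (Fin 2)) {w : EuclideanSpace ℝ (Fin 2)}
    (hw : w ≠ 0) : dist (lineClass v) (lineClass w) ≤ ‖v - w‖ / (4 * ‖w‖) := by
  let e := orthonormalBasisOneI.repr.symm
  have hew : e w ≠ 0 := AddEquivClass.map_ne_zero_iff.2 hw
  have h := dist_coe_arg_div_two_pi_le (e v) hew
  rwa [← map_sub, e.norm_map, e.norm_map] at h

end

theorem abs_cross_le_norm_mul_norm (a b : EuclideanSpace ℝ (Fin 2)) :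
    |a 0 * b 1 - a 1 * b 0| ≤ ‖a‖ * ‖b‖ := by
  refine abs_le_of_sq_le_sq ?_ (by positivity)
  rw [mul_pow, EuclideanSpace.real_norm_sq_eq, EuclideanSpace.real_norm_sq_eq]
  simp only [Fin.sum_univ_two]
  nlinarith [sq_nonneg (a 0 * b 0 + a 1 * b 1)]

theorem norm_toEuclideanLin_le (M : M2R) (v : EuclideanSpace ℝ (Fin 2)) :
    ‖toEuclideanLin M v‖ ≤ opNorm M * ‖v‖ :=
  (LinearMap.toContinuousLinearMap (toEuclideanLin M)).le_opNorm v

theorem abs_det_mul_norm_le (M : M2R) (v : EuclideanSpace ℝ (Fin 2)) :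
    |M.det| * ‖v‖ ≤ opNorm M * ‖toEuclideanLin M v‖ := by
  set w : EuclideanSpace ℝ (Fin 2) := !₂[-v 1, v 0]
  have hw : ‖w‖ = ‖v‖ := by
    simp [w, EuclideanSpace.norm_eq, Fin.sum_univ_two, add_comm]
  have hcross : (toEuclideanLin M v) 0 * (toEuclideanLin M w) 1
      - (toEuclideanLin M v) 1 * (toEuclideanLin M w) 0 = M.det * ‖v‖ ^ 2 := by
    simp only [w, ofLp_toLpLin, toLin'_apply, toLpLin_toLp, mulVec_fin_two, cons_val_zero,
      cons_val_one, cons_val_fin_one, det_fin_two, EuclideanSpace.real_norm_sq_eq, Fin.sum_univ_two]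
    ring
  have harea : |M.det| * ‖v‖ ^ 2 ≤ ‖toEuclideanLin M v‖ * (opNorm M * ‖v‖) := by
    calc |M.det| * ‖v‖ ^ 2 = |M.det * ‖v‖ ^ 2| := by rw [abs_mul, abs_of_nonneg (sq_nonneg ‖v‖)]
      _ ≤ ‖toEuclideanLin M v‖ * ‖toEuclideanLin M w‖ :=
          hcross ▸ abs_cross_le_norm_mul_norm _ _
      _ ≤ ‖toEuclideanLin M v‖ * (opNorm M * ‖v‖) := by
          gcongr
          exact hw ▸ norm_toEuclideanLin_le M w
  rcases (norm_nonneg v).eq_or_lt with hv | hv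
  · rw [← hv, mul_zero]
    exact mul_nonneg (norm_nonneg _) (norm_nonneg _)
  · nlinarith

theorem norm_dirVec (t : ℝ) : ‖dirVec t‖ = 1 := by
  simp [dirVec, EuclideanSpace.norm_eq, Fin.sum_univ_two]

theorem one_le_opNorm_of_det_eq_one {M : M2R} (hM : M.det = 1) : 1 ≤ opNorm M := by
  have hlow := abs_det_mul_norm_le M (dirVec 0)
  have hup := norm_toEuclideanLin_le M (dirVec 0)
  rw [hM, abs_one, norm_dirVec, one_mul] at hlow
  rw [norm_dirVec, mul_one] at hup
  nlinarith [norm_nonneg (toEuclideanLin M (dirVec 0))]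

theorem dist_projAct_mul_le (P G : M2R) (hP : P.det ≠ 0) (φ : RP1) :
    dist (projAct (P * G) φ) (projAct P φ)
      ≤ opNorm P ^ 2 * opNorm (G - 1) / (4 * |P.det|) := by
  set v := dirVec (repHalf φ)
  set w := toEuclideanLin P v
  have hlow : |P.det| ≤ opNorm P * ‖w‖ := by
    simpa [v, norm_dirVec] using abs_det_mul_norm_le P v
  have hdet : 0 < |P.det| := abs_pos.2 hP
  have hprod : 0 < opNorm P * ‖w‖ := hdet.trans_le hlow
  have hPpos : 0 < opNorm P := pos_of_mul_pos_left hprod (norm_nonneg w)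
  have hw : 0 < ‖w‖ := pos_of_mul_pos_right hprod hPpos.le
  have hdiff : ‖toEuclideanLin (P * G) v - w‖ ≤ opNorm P * opNorm (G - 1) := by
    have h : toEuclideanLin (P * G) v - w = toEuclideanLin P (toEuclideanLin (G - 1) v) := by
      simp [w, toEuclideanLin]
    rw [h]
    calc _ ≤ opNorm P * ‖toEuclideanLin (G - 1) v‖ := norm_toEuclideanLin_le _ _
      _ ≤ opNorm P * opNorm (G - 1) := by
          gcongr
          simpa [v, norm_dirVec] using norm_toEuclideanLin_le (G - 1) v
  calc dist (projAct (P * G) φ) (projAct P φ)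
      ≤ ‖toEuclideanLin (P * G) v - w‖ / (4 * ‖w‖) := dist_lineClass_le _ (norm_pos_iff.1 hw)
    _ ≤ opNorm P * opNorm (G - 1) / (4 * (|P.det| / opNorm P)) := by
        refine div_le_div₀ ((norm_nonneg _).trans hdiff) hdiff (by positivity) ?_
        gcongr
        rwa [div_le_iff₀' hPpos]
    _ = opNorm P ^ 2 * opNorm (G - 1) / (4 * |P.det|) := by
        field_simp

theorem continuous_opNorm : Continuous opNorm :=
  continuous_norm.comp (LinearMap.continuous_of_finiteDimensional
    (toEuclideanLin.trans LinearMap.toContinuousLinearMap : M2R ≃ₗ[ℝ] _).toLinearMap)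

theorem opNorm_neg (M : M2R) : opNorm (-M) = opNorm M := by
  simp [opNorm]

theorem opNorm_le_normC0T {G : T1 → M2R} (hG : Continuous G) (x : T1) :
    opNorm (G x) ≤ normC0T G :=
  le_ciSup (isCompact_range (continuous_opNorm.comp hG)).bddAbove x

theorem opNorm_le_normC1R {B : ℝ → M2R} (hB : Continuous B) (hper : PMPeriodic B) (x : ℝ) :
    opNorm (B x) ≤ normC1R B := by
  have hperiodic : Function.Periodic (fun x => opNorm (B x)) 1 := fun x => by
    rcases hper x with h | h <;> simp [h, opNorm_neg]
  have hbdd := (hperiodic.compact_of_continuous one_ne_zero (continuous_opNorm.comp hB)).bddAbove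
  exact (le_ciSup hbdd x).trans (le_max_left _ _)

theorem dist_TprojR (a : T1) (B B' : ℝ → M2R) (p : T1 × RP1) :
    dist (TprojR a B p) (TprojR a B' p)
      = dist (projAct (B (rep1 p.1)) p.2) (projAct (B' (rep1 p.1)) p.2) := by
  simp [TprojR, Prod.dist_eq]

/-- Perturbation estimate for projective actions:
`d(T_{(a,AF)}(θ,φ), T_{(a,A)}(θ,φ)) ≤ 2C* ‖A‖_{C¹}⁴ ‖F - I‖_{C⁰}` whenever
`‖F - I‖_{C⁰} ≤ 1/6`. -/
theorem projective_action_perturbation :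
    ∃ Cs : ℝ, 1 ≤ Cs ∧
      ∀ (aT : T1) (A : ℝ → M2R),
        (∀ (i j : Fin 2), ContDiff ℝ 1 fun x => A x i j) → SL2V A → PMPeriodic A →
      ∀ F : T1 → M2R, Continuous F → SL2V F →
        normC0T (fun x => F x - 1) ≤ 1/6 →
      ∀ p : T1 × RP1,
        dist (TprojR aT (fun x => A x * F ((x : ℝ) : T1)) p) (TprojR aT A p)
          ≤ 2 * Cs * normC1R A ^ 4 * normC0T (fun x => F x - 1) := by
  refine ⟨1, le_rfl, fun aT A hA hdetA hperA F hF _ _ p => ?_⟩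
  rw [dist_TprojR]
  set x := rep1 p.1
  have hAc : Continuous A := continuous_pi fun i => continuous_pi fun j => (hA i j).continuous
  have hAx : opNorm (A x) ≤ normC1R A := opNorm_le_normC1R hAc hperA x
  have hFx : opNorm (F x - 1) ≤ normC0T (fun x => F x - 1) :=
    opNorm_le_normC0T (hF.sub continuous_const) _
  have hF0 : 0 ≤ opNorm (F x - 1) := norm_nonneg _
  have hA1 : 1 ≤ opNorm (A x) := one_le_opNorm_of_det_eq_one (hdetA x)
  have hsq : opNorm (A x) ^ 2 ≤ normC1R A ^ 4 :=
    (pow_le_pow_right₀ hA1 (by norm_num : 2 ≤ 4)).trans (by gcongr)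
  have hprod := mul_le_mul hsq hFx hF0 (by positivity)
  calc _ ≤ opNorm (A x) ^ 2 * opNorm (F x - 1) / (4 * |(A x).det|) :=
        dist_projAct_mul_le _ _ (by simp [hdetA x]) _
    _ ≤ 2 * 1 * normC1R A ^ 4 * normC0T (fun x => F x - 1) := by
        rw [hdetA x, abs_one]
        linarith [mul_nonneg (by positivity : 0 ≤ normC1R A ^ 4) (hF0.trans hFx)]

end Paper

end
end
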